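/- arXiv:1606.04370 — 3 statements merged into one kernel-verified Lean document; each statement's English description precedes it below -/
import Mathlib

section
/- Let a1,...,a5 be rationals with 1 ≥ a1 ≥ a2 ≥ a3 ≥ a4 ≥ a5 ≥ 0, let δ ≥ 0 be rational, and let N be the largest number among a2, a2+a3, a2+a4, a2+a5, a3+a4, a3+a5, a4+a5, a2+a3+a4, a2+a3+a5, a2+a4+a5, a3+a4+a5, a2+a3+a4+a5 that does not exceed 1 (and N = 0 if all exceed 1). Then 2/(3+2a1+2δ+N) ≤ (2/3)·(4+2δ+a1+a2+a3+a4+a5)/(4+4δ+2(a1+a2+a3+a4+a5)−a1²−a2²−a3²−a4²−a5²), with strict inequality unless a1 = δ = 0. -/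
set_option maxHeartbeats 1000000 in
theorem stmt_0 (a1 a2 a3 a4 a5 δ N : ℚ)
    (ha1 : a1 ≤ 1) (h12 : a2 ≤ a1) (h23 : a3 ≤ a2) (h34 : a4 ≤ a3) (h45 : a5 ≤ a4)
    (ha5 : 0 ≤ a5) (hδ : 0 ≤ δ)
    (hNmem : (N ∈ [a2, a2+a3, a2+a4, a2+a5, a3+a4, a3+a5, a4+a5,
        a2+a3+a4, a2+a3+a5, a2+a4+a5, a3+a4+a5, a2+a3+a4+a5] ∧ N ≤ 1) ∨
      (N = 0 ∧ ∀ s ∈ [a2, a2+a3, a2+a4, a2+a5, a3+a4, a3+a5, a4+a5,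
        a2+a3+a4, a2+a3+a5, a2+a4+a5, a3+a4+a5, a2+a3+a4+a5], 1 < s))
    (hNmax : ∀ s ∈ [a2, a2+a3, a2+a4, a2+a5, a3+a4, a3+a5, a4+a5,
        a2+a3+a4, a2+a3+a5, a2+a4+a5, a3+a4+a5, a2+a3+a4+a5], s ≤ 1 → s ≤ N) :
    2 / (3 + 2*a1 + 2*δ + N) ≤
      2/3 * ((4 + 2*δ + a1 + a2 + a3 + a4 + a5) /
        (4 + 4*δ + 2*(a1 + a2 + a3 + a4 + a5) - a1^2 - a2^2 - a3^2 - a4^2 - a5^2)) ∧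
    (¬(a1 = 0 ∧ δ = 0) →
      2 / (3 + 2*a1 + 2*δ + N) <
        2/3 * ((4 + 2*δ + a1 + a2 + a3 + a4 + a5) /
          (4 + 4*δ + 2*(a1 + a2 + a3 + a4 + a5) - a1^2 - a2^2 - a3^2 - a4^2 - a5^2))) := by
  have h40 : 0 ≤ a4 := ha5.trans h45
  have h30 : 0 ≤ a3 := h40.trans h34
  have h20 : 0 ≤ a2 := h30.trans h23
  have h10 : 0 ≤ a1 := h20.trans h12
  have ha2 : a2 ≤ 1 := h12.trans ha1
  have hNa2 : a2 ≤ N := hNmax a2 (by simp) ha2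
  have hN0 : 0 ≤ N := h20.trans hNa2
  have hD1 : (0:ℚ) < 3 + 2*a1 + 2*δ + N := by linarith
  have hD2 : (0:ℚ) < 4 + 4*δ + 2*(a1 + a2 + a3 + a4 + a5) - a1^2 - a2^2 - a3^2 - a4^2 - a5^2 := by
    nlinarith [mul_nonneg h10 (sub_nonneg.2 ha1), mul_nonneg h20 (sub_nonneg.2 ha2),
      mul_nonneg h30 (sub_nonneg.2 (h23.trans ha2)), mul_nonneg h40 (sub_nonneg.2 ((h34.trans h23).trans ha2)),
      mul_nonneg ha5 (sub_nonneg.2 (((h45.trans h34).trans h23).trans ha2))]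
  have key : 5*a1 + 2*δ + 3*(4 + 4*δ + 2*(a1 + a2 + a3 + a4 + a5) - a1^2 - a2^2 - a3^2 - a4^2 - a5^2)
      ≤ (4 + 2*δ + a1 + a2 + a3 + a4 + a5) * (3 + 2*a1 + 2*δ + N) := by
    by_cases hT : a2 + a3 + a4 + a5 ≤ 1
    · have hNT : a2 + a3 + a4 + a5 ≤ N := hNmax _ (by simp) hT
      nlinarith [mul_nonneg hδ hδ, mul_nonneg hδ h10, mul_nonneg hδ hN0,
        mul_nonneg hδ (by linarith : (0:ℚ) ≤ a1 + a2 + a3 + a4 + a5),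
        mul_nonneg (by linarith : (0:ℚ) ≤ N - (a2+a3+a4+a5)) (by linarith : (0:ℚ) ≤ 4 + a1 + a2+a3+a4+a5),
        sq_nonneg (a2+a3+a4+a5), mul_nonneg h10 (by linarith : (0:ℚ) ≤ a2+a3+a4+a5),
        sq_nonneg a1, sq_nonneg a2, sq_nonneg a3, sq_nonneg a4, sq_nonneg a5]
    · push_neg at hT
      have h2N : 1 < 2*N := by
        by_cases h23' : a2 + a3 ≤ 1
        · by_cases h234 : a2 + a3 + a4 ≤ 1
          · have := hNmax (a2+a3+a4) (by simp) h234
            linarith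
          · have := hNmax (a2+a3) (by simp) h23'
            push_neg at h234
            linarith
        · push_neg at h23'
          linarith
      nlinarith [mul_nonneg hδ (by linarith : (0:ℚ) ≤ 2*a1 + 2*δ + N + (a1+a2+a3+a4+a5)),
        mul_nonneg (by linarith : (0:ℚ) ≤ 2*N - 1) (by linarith : (0:ℚ) ≤ 4 + a1 + (a2+a3+a4+a5)),
        sq_nonneg (a2-a3), sq_nonneg (a2-a4), sq_nonneg (a2-a5), sq_nonneg (a3-a4),
        sq_nonneg (a3-a5), sq_nonneg (a4-a5),
        sq_nonneg (3*(a2+a3+a4+a5) - 5 + 4*a1), sq_nonneg a1, hT]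
  have heq : 2/3 * ((4 + 2*δ + a1 + a2 + a3 + a4 + a5) /
        (4 + 4*δ + 2*(a1 + a2 + a3 + a4 + a5) - a1^2 - a2^2 - a3^2 - a4^2 - a5^2))
      = (2 * (4 + 2*δ + a1 + a2 + a3 + a4 + a5)) /
        (3 * (4 + 4*δ + 2*(a1 + a2 + a3 + a4 + a5) - a1^2 - a2^2 - a3^2 - a4^2 - a5^2)) := by
    rw [div_mul_eq_mul_div, mul_div_assoc, div_div]
    ring_nf
  have h3D2 : (0:ℚ) < 3 * (4 + 4*δ + 2*(a1 + a2 + a3 + a4 + a5) - a1^2 - a2^2 - a3^2 - a4^2 - a5^2) := by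
    linarith
  constructor
  · rw [heq, div_le_div_iff₀ hD1 h3D2]
    nlinarith [key, hδ, h10]
  · intro hne
    have hpos : 0 < 5*a1 + 2*δ := by
      rcases (not_and_or.mp hne) with h | h
      · have : 0 < a1 := lt_of_le_of_ne h10 (Ne.symm h)
        linarith
      · have : 0 < δ := lt_of_le_of_ne hδ (Ne.symm h)
        linarith
    rw [heq, div_lt_div_iff₀ hD1 h3D2]
    nlinarith [key, hpos]
end

section
/- Let a1,...,a5 be rationals with 1 ≥ a1 ≥ a2 ≥ a3 ≥ a4 ≥ a5 ≥ 0 and δ ≥ 0 rational. Suppose a1 > 0 or δ > 0. If N denotes the largest among the twelve sums a2, a2+a3, ..., a2+a3+a4+a5 (as above) not exceeding 1, then it is impossible that 3∑_{i=1}^5 ai − 3∑ai² − 2δ ≥ (2a1+N+2δ)∑ai + 8a1 + 4N + 4a1δ + 2Nδ + 4δ². -/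
set_option maxHeartbeats 1000000

theorem stmt_1 (a1 a2 a3 a4 a5 δ N : ℚ)
    (ha1 : a1 ≤ 1) (h12 : a2 ≤ a1) (h23 : a3 ≤ a2) (h34 : a4 ≤ a3) (h45 : a5 ≤ a4)
    (ha5 : 0 ≤ a5) (hδ : 0 ≤ δ) (hpos : 0 < a1 ∨ 0 < δ)
    (hNmem : (N ∈ [a2, a2+a3, a2+a4, a2+a5, a3+a4, a3+a5, a4+a5,
        a2+a3+a4, a2+a3+a5, a2+a4+a5, a3+a4+a5, a2+a3+a4+a5] ∧ N ≤ 1) ∨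
      (N = 0 ∧ ∀ s ∈ [a2, a2+a3, a2+a4, a2+a5, a3+a4, a3+a5, a4+a5,
        a2+a3+a4, a2+a3+a5, a2+a4+a5, a3+a4+a5, a2+a3+a4+a5], 1 < s))
    (hNmax : ∀ s ∈ [a2, a2+a3, a2+a4, a2+a5, a3+a4, a3+a5, a4+a5,
        a2+a3+a4, a2+a3+a5, a2+a4+a5, a3+a4+a5, a2+a3+a4+a5], s ≤ 1 → s ≤ N) :
    ¬(3*(a1+a2+a3+a4+a5) - 3*(a1^2+a2^2+a3^2+a4^2+a5^2) - 2*δ ≥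
        (2*a1 + N + 2*δ)*(a1+a2+a3+a4+a5) + 8*a1 + 4*N + 4*a1*δ + 2*N*δ + 4*δ^2) := by
  intro h
  have h4 : 0 ≤ a4 := le_trans ha5 h45
  have h3 : 0 ≤ a3 := le_trans h4 h34
  have h2 : 0 ≤ a2 := le_trans h3 h23
  have h1 : 0 ≤ a1 := le_trans h2 h12
  have hp8 : 0 < a1 + δ := by rcases hpos with hp | hp <;> linarith
  rcases hNmem with ⟨hmem, hN1⟩ | ⟨hN0, hall⟩
  · have ha2N : a2 ≤ N := hNmax a2 (by simp) (le_trans h12 ha1)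
    have hN0' : 0 ≤ N := le_trans h2 ha2N
    by_cases d2 : a2+a3+a4 ≤ N
    · -- Branch A: a2+a3+a4 ≤ N, so S ≤ a1 + N + a5
      by_cases hc : 2*a1 + N + 2*δ ≤ 3
      · have key : 0 ≤ (3 - 2*a1 - N - 2*δ) * (a1 + N + a5 - (a1+a2+a3+a4+a5)) :=
          mul_nonneg (by linarith) (by linarith)
        nlinarith [key, mul_nonneg h1 h1, mul_nonneg h1 hN0', mul_nonneg hN0' hN0',
          mul_nonneg hδ h1, mul_nonneg hδ hN0', sq_nonneg δ, mul_nonneg h1 ha5,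
          mul_nonneg hN0' ha5, mul_nonneg hδ ha5, sq_nonneg a1, sq_nonneg a2,
          sq_nonneg a3, sq_nonneg a4, sq_nonneg a5]
      · have key : 0 ≤ (2*a1 + N + 2*δ - 3) * (a1+a2+a3+a4+a5) :=
          mul_nonneg (by linarith) (by linarith)
        nlinarith [key, sq_nonneg a1, sq_nonneg a2, sq_nonneg a3, sq_nonneg a4,
          sq_nonneg a5, sq_nonneg δ, mul_nonneg h1 hδ, mul_nonneg hN0' hδ]
    · -- Branch B: a2+a3+a4 > 1
      have hu : 1 < a2+a3+a4 := by
        by_contra hc; exact d2 (hNmax _ (by simp) (le_of_not_gt hc))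
      nlinarith [sq_nonneg (a2-a3), sq_nonneg (a3-a4), sq_nonneg (a2-a4),
        sq_nonneg (a2+a3+a4 - 3*a5), mul_nonneg hδ hδ, mul_nonneg h1 hδ,
        mul_nonneg hN0' hδ, mul_nonneg hδ ha5,
        mul_nonneg (le_of_lt (lt_of_le_of_lt (by linarith : (0:ℚ) ≤ 1) hu))
          (sub_nonneg.2 ha2N),
        mul_pos (show (0:ℚ) < a2+a3+a4 - 1 by linarith)
          (show (0:ℚ) < a1 + N by nlinarith),
        sq_nonneg (a2+a3+a4-1), sq_nonneg a5, mul_nonneg ha5 h1, mul_nonneg ha5 hN0',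
        mul_nonneg hδ (show (0:ℚ) ≤ a2+a3+a4 by linarith)]
  · subst hN0
    have h45' : 1 < a4 + a5 := hall (a4+a5) (by simp)
    have ha4h : 1/2 < a4 := by linarith
    have key : 0 < a1 * (a1+a2+a3+a4+a5 - 5/2) :=
      mul_pos (by linarith) (by linarith)
    nlinarith [key, sq_nonneg (2*a1-1), sq_nonneg (2*a2-1), sq_nonneg (2*a3-1),
      sq_nonneg (2*a4-1), sq_nonneg (2*a5-1), sq_nonneg δ,
      mul_nonneg hδ (show (0:ℚ) ≤ a1+a2+a3+a4+a5 by linarith), mul_nonneg h1 hδ]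
end

section
/- Let a1, a2, a3, a4 and δ be non-negative rationals with 1 ≥ a1 ≥ a2 ≥ a3 ≥ a4, and set α = 2/(3+2a1+2δ+a2+a3+a4) if a2+a3 ≤ 1+a4; α = 2/(3+2a1+2δ+a2+a4) if a2+a4 ≤ 1 and a2+a3 > 1+a4; α = 2/(3+2a1+2δ+a3+a4) if a3+a4 ≤ 1, a2+a4 > 1 and a2+a3 > 1+a4; and α = 2/(3+2a1+2δ+a2) otherwise. Then α ≤ (8+4δ+2a1+2a2+2a3+2a4)/(12+12δ+6a1+6a2+6a3+6a4−3a1²−3a2²−3a3²−3a4²), with strict inequality unless a1 = δ = 0. -/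
theorem stmt_2 (a1 a2 a3 a4 δ α : ℚ)
    (ha1 : a1 ≤ 1) (h12 : a2 ≤ a1) (h23 : a3 ≤ a2) (h34 : a4 ≤ a3)
    (ha4 : 0 ≤ a4) (hδ : 0 ≤ δ)
    (hα : α = if a2 + a3 ≤ 1 + a4 then 2 / (3 + 2*a1 + 2*δ + a2 + a3 + a4)
      else if a2 + a4 ≤ 1 then 2 / (3 + 2*a1 + 2*δ + a2 + a4)
      else if a3 + a4 ≤ 1 then 2 / (3 + 2*a1 + 2*δ + a3 + a4)
      else 2 / (3 + 2*a1 + 2*δ + a2)) :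
    α ≤ (8 + 4*δ + 2*a1 + 2*a2 + 2*a3 + 2*a4) /
        (12 + 12*δ + 6*a1 + 6*a2 + 6*a3 + 6*a4 - 3*a1^2 - 3*a2^2 - 3*a3^2 - 3*a4^2) ∧
    (¬(a1 = 0 ∧ δ = 0) →
      α < (8 + 4*δ + 2*a1 + 2*a2 + 2*a3 + 2*a4) /
        (12 + 12*δ + 6*a1 + 6*a2 + 6*a3 + 6*a4 - 3*a1^2 - 3*a2^2 - 3*a3^2 - 3*a4^2)) := by
  have ha3 : 0 ≤ a3 := le_trans ha4 h34
  have ha2 : 0 ≤ a2 := le_trans ha3 h23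
  have ha0 : 0 ≤ a1 := le_trans ha2 h12
  have hD : 0 < 12 + 12*δ + 6*a1 + 6*a2 + 6*a3 + 6*a4 - 3*a1^2 - 3*a2^2 - 3*a3^2 - 3*a4^2 := by
    nlinarith [mul_nonneg ha0 (sub_nonneg.2 ha1), mul_nonneg ha2 (sub_nonneg.2 (h12.trans ha1)),
      mul_nonneg ha3 (sub_nonneg.2 ((h23.trans h12).trans ha1)),
      mul_nonneg ha4 (sub_nonneg.2 (((h34.trans h23).trans h12).trans ha1))]
  subst hα
  split_ifs with h1 h2 h3
  · have hB : (0:ℚ) < 3 + 2*a1 + 2*δ + a2 + a3 + a4 := by linarith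
    constructor
    · rw [div_le_div_iff₀ hB hD]
      nlinarith [sq_nonneg (a1+a2+a3+a4), mul_nonneg (mul_nonneg hδ hδ) hδ,
        mul_nonneg hδ (add_nonneg (add_nonneg (add_nonneg ha0 ha2) ha3) ha4),
        mul_nonneg ha0 (add_nonneg (add_nonneg ha2 ha3) ha4), sq_nonneg δ,
        sq_nonneg a1, sq_nonneg a2, sq_nonneg a3, sq_nonneg a4, mul_nonneg hδ ha0]
    · intro hne
      have h' : 0 < a1 ∨ 0 < δ := by
        by_contra hc
        push_neg at hc
        exact hne ⟨le_antisymm hc.1 ha0, le_antisymm hc.2 hδ⟩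
      rw [div_lt_div_iff₀ hB hD]
      rcases h' with h' | h' <;>
      nlinarith [sq_nonneg (a1+a2+a3+a4), mul_nonneg (mul_nonneg hδ hδ) hδ,
        mul_nonneg hδ (add_nonneg (add_nonneg (add_nonneg ha0 ha2) ha3) ha4),
        mul_nonneg ha0 (add_nonneg (add_nonneg ha2 ha3) ha4), sq_nonneg δ,
        sq_nonneg a1, sq_nonneg a2, sq_nonneg a3, sq_nonneg a4, mul_nonneg hδ ha0]
  · have hB : (0:ℚ) < 3 + 2*a1 + 2*δ + a2 + a4 := by linarith
    have key : 2 / (3 + 2*a1 + 2*δ + a2 + a4) <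
        (8 + 4*δ + 2*a1 + 2*a2 + 2*a3 + 2*a4) /
        (12 + 12*δ + 6*a1 + 6*a2 + 6*a3 + 6*a4 - 3*a1^2 - 3*a2^2 - 3*a3^2 - 3*a4^2) := by
      rw [div_lt_div_iff₀ hB hD]
      push_neg at h1
      linarith [mul_nonneg hδ hδ, mul_nonneg hδ ha0, mul_nonneg hδ ha2, mul_nonneg hδ ha3,
        mul_nonneg hδ ha4, mul_nonneg ha0 ha2, mul_nonneg ha0 ha3, mul_nonneg ha0 ha4,
        mul_nonneg ha2 ha3, mul_nonneg ha2 ha4, mul_nonneg ha3 ha4,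
        sq_nonneg a1, sq_nonneg a2, sq_nonneg a3, sq_nonneg a4]
    exact ⟨key.le, fun _ => key⟩
  · have hB : (0:ℚ) < 3 + 2*a1 + 2*δ + a3 + a4 := by linarith
    have key : 2 / (3 + 2*a1 + 2*δ + a3 + a4) <
        (8 + 4*δ + 2*a1 + 2*a2 + 2*a3 + 2*a4) /
        (12 + 12*δ + 6*a1 + 6*a2 + 6*a3 + 6*a4 - 3*a1^2 - 3*a2^2 - 3*a3^2 - 3*a4^2) := by
      rw [div_lt_div_iff₀ hB hD]
      push_neg at h1 h2
      linarith [mul_nonneg hδ hδ, mul_nonneg hδ ha0, mul_nonneg hδ ha2, mul_nonneg hδ ha3,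
        mul_nonneg hδ ha4, mul_nonneg ha0 ha2, mul_nonneg ha0 ha3, mul_nonneg ha0 ha4,
        mul_nonneg ha2 ha3, mul_nonneg ha2 ha4, mul_nonneg ha3 ha4,
        sq_nonneg a1, sq_nonneg a2, sq_nonneg a3, sq_nonneg a4]
    exact ⟨key.le, fun _ => key⟩
  · have hB : (0:ℚ) < 3 + 2*a1 + 2*δ + a2 := by linarith
    have key : 2 / (3 + 2*a1 + 2*δ + a2) <
        (8 + 4*δ + 2*a1 + 2*a2 + 2*a3 + 2*a4) /
        (12 + 12*δ + 6*a1 + 6*a2 + 6*a3 + 6*a4 - 3*a1^2 - 3*a2^2 - 3*a3^2 - 3*a4^2) := by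
      rw [div_lt_div_iff₀ hB hD]
      push_neg at h1 h2 h3
      linarith [mul_nonneg hδ hδ, mul_nonneg hδ ha0, mul_nonneg hδ ha2, mul_nonneg hδ ha3,
        mul_nonneg hδ ha4, mul_nonneg ha0 ha2, mul_nonneg ha0 ha3, mul_nonneg ha0 ha4,
        mul_nonneg ha2 ha3, mul_nonneg ha2 ha4, mul_nonneg ha3 ha4,
        sq_nonneg (a3 + a4 - 1), sq_nonneg (a3 - a4), sq_nonneg a1, sq_nonneg a2]
    exact ⟨key.le, fun _ => key⟩
end
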